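/- Entropic lower bound via accessible information: for every finite type Y and every POVM E indexed by Y, the optimally ordered classical guesswork satisfies G(ρ,p;E) ≥ 2^{H(p) − I(X:Y_E)} / e + 1/2, where I(X:Y_E) is the classical mutual information in bits of the joint distribution P(x,y) = p(x) · Re Tr(E_y · ρ x) and e is Euler's number. -/

import Mathlib

open Matrix BigOperators Finset ComplexOrder

noncomputable section

/-- A POVM indexed by a finite type `Y` in dimension `d`. -/
def IsPOVM {d : ℕ} {Y : Type*} [Fintype Y] (E : Y → Matrix (Fin d) (Fin d) ℂ) : Prop :=
  (∀ y, (E y).PosSemidef) ∧ ∑ y, E y = 1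

/-- Guesswork of the strategy (POVM) `E` indexed by permutations:
`Ĝ(ρ,p;E) = ∑_σ ∑_t t · p(σ(t)) · Re Tr(E_σ ρ_{σ(t)})`. -/
def Ghat {d n : ℕ} (ρ : Fin n → Matrix (Fin d) (Fin d) ℂ) (p : Fin n → ℝ)
    (E : Equiv.Perm (Fin n) → Matrix (Fin d) (Fin d) ℂ) : ℝ :=
  ∑ σ : Equiv.Perm (Fin n), ∑ t : Fin n,
    ((t.val : ℝ) + 1) * p (σ t) * ((E σ * ρ (σ t)).trace.re)

/-- The quantum guesswork: infimum of `Ĝ` over all POVMs indexed by `S_n`. -/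
def QGuesswork {d n : ℕ} (ρ : Fin n → Matrix (Fin d) (Fin d) ℂ) (p : Fin n → ℝ) : ℝ :=
  ⨅ E : {E : Equiv.Perm (Fin n) → Matrix (Fin d) (Fin d) ℂ // IsPOVM E}, Ghat ρ p E.1

/-- The optimally ordered classical guesswork of a POVM indexed by a finite type `Y`. -/
def Gopt {d n : ℕ} (ρ : Fin n → Matrix (Fin d) (Fin d) ℂ) (p : Fin n → ℝ)
    {Y : Type*} [Fintype Y] (E : Y → Matrix (Fin d) (Fin d) ℂ) : ℝ :=
  ∑ y : Y, ⨅ τ : Equiv.Perm (Fin n),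
    ∑ i : Fin n, (((τ i).val : ℝ) + 1) * p i * ((E y * ρ i).trace.re)

/-- `𝓔_σ = ∑_t (2t - n - 1) p(σ(t)) ρ_{σ(t)}`. -/
def calE {d n : ℕ} (ρ : Fin n → Matrix (Fin d) (Fin d) ℂ) (p : Fin n → ℝ)
    (σ : Equiv.Perm (Fin n)) : Matrix (Fin d) (Fin d) ℂ :=
  ∑ t : Fin n, ((2 * ((t.val : ℝ) + 1) - n - 1) * p (σ t)) • ρ (σ t)

/-- Functional calculus `f(A)` of a real function on a Hermitian matrix
(junk value `0` if `A` is not Hermitian). -/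
def herApply {d : ℕ} (f : ℝ → ℝ) (A : Matrix (Fin d) (Fin d) ℂ) :
    Matrix (Fin d) (Fin d) ℂ :=
  if hA : A.IsHermitian then
    (hA.eigenvectorUnitary : Matrix (Fin d) (Fin d) ℂ) *
      Matrix.diagonal (fun i => (f (hA.eigenvalues i) : ℂ)) *
      star (hA.eigenvectorUnitary : Matrix (Fin d) (Fin d) ℂ)
  else 0

/-- `|A|`, the absolute value of a Hermitian matrix. -/
def matAbs {d : ℕ} (A : Matrix (Fin d) (Fin d) ℂ) : Matrix (Fin d) (Fin d) ℂ :=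
  herApply (fun x => |x|) A

/-- Trace norm `‖A‖ = Re Tr |A|` of a Hermitian matrix. -/
def traceNorm {d : ℕ} (A : Matrix (Fin d) (Fin d) ℂ) : ℝ :=
  (matAbs A).trace.re

/-- The reversed permutation `σ̄(t) = σ(n+1-t)`. -/
def permBar {n : ℕ} (σ : Equiv.Perm (Fin n)) : Equiv.Perm (Fin n) :=
  σ * Fin.revPerm

/-- `g(λ) = 1` for `λ < 0`, `1/2` for `λ = 0`, `0` for `λ > 0`. -/
def gNeg : ℝ → ℝ := fun x => if x < 0 then 1 else if x = 0 then 1 / 2 else 0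

/-- Dall'Arno's POVM `E^{σ*}`. -/
def povmStar {d n : ℕ} (ρ : Fin n → Matrix (Fin d) (Fin d) ℂ) (p : Fin n → ℝ)
    (σs : Equiv.Perm (Fin n)) : Equiv.Perm (Fin n) → Matrix (Fin d) (Fin d) ℂ :=
  fun σ => if σ = σs ∨ σ = permBar σs then herApply gNeg (calE ρ p σ) else 0



/-- Shannon entropy in bits. -/
def shannonH {n : ℕ} (p : Fin n → ℝ) : ℝ := -∑ x, p x * Real.logb 2 (p x)

/-- Von Neumann entropy in bits (junk value `0` for non-Hermitian matrices). -/
def vonNeumann {d : ℕ} (A : Matrix (Fin d) (Fin d) ℂ) : ℝ :=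
  if hA : A.IsHermitian then -∑ i, hA.eigenvalues i * Real.logb 2 (hA.eigenvalues i) else 0

/-- Holevo information of the ensemble, in bits. -/
def holevoInfo {d n : ℕ} (ρ : Fin n → Matrix (Fin d) (Fin d) ℂ) (p : Fin n → ℝ) : ℝ :=
  vonNeumann (∑ x, p x • ρ x) - ∑ x, p x * vonNeumann (ρ x)

section GuessworkAux

lemma psd_trace_re_nonneg {d : ℕ} {M : Matrix (Fin d) (Fin d) ℂ} (hM : M.PosSemidef) :
    0 ≤ M.trace.re := by
  have h : ∀ i, 0 ≤ (M i i).re := by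
    intro i
    have := hM.dotProduct_mulVec_nonneg (Pi.single i 1)
    rw [Complex.nonneg_iff] at this
    simpa [Matrix.mulVec, dotProduct, Pi.single_apply] using this.1
  simpa [Matrix.trace, Matrix.diag, Complex.re_sum] using Finset.sum_nonneg fun i _ => h i

open scoped MatrixOrder in
lemma trace_mul_re_nonneg {d : ℕ} {A B : Matrix (Fin d) (Fin d) ℂ}
    (hA : A.PosSemidef) (hB : B.PosSemidef) : 0 ≤ (A * B).trace.re := by
  have h1 : (A * B).trace = ((CFC.sqrt B)ᴴ * A * CFC.sqrt B).trace := by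
    conv_lhs => rw [← CFC.sqrt_mul_sqrt_self B hB.nonneg]
    rw [← Matrix.mul_assoc, Matrix.trace_mul_comm, (CFC.sqrt_nonneg B).posSemidef.1.eq, ← Matrix.mul_assoc]
  rw [h1]
  exact psd_trace_re_nonneg (hA.conjTranspose_mul_mul_same _)


lemma key_exp {l : ℝ} (hl : 0 ≤ l) : l * Real.exp (-l / 2) ≤ 1 - Real.exp (-l) := by
  have h1 : 1 - Real.exp (-l) = Real.exp (-l / 2) * (2 * Real.sinh (l / 2)) := by
    have e1 : Real.exp (-l / 2) * Real.exp (l / 2) = 1 := by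
      rw [← Real.exp_add]; rw [show -l/2 + l/2 = 0 by ring, Real.exp_zero]
    have e2 : Real.exp (-l / 2) * Real.exp (-(l / 2)) = Real.exp (-l) := by
      rw [← Real.exp_add]; congr 1; ring
    rw [Real.sinh_eq]
    nlinarith [e1, e2]
  rw [h1]
  have h2 : l / 2 ≤ Real.sinh (l / 2) := Real.self_le_sinh_iff.mpr (by linarith)
  nlinarith [Real.exp_pos (-l / 2)]

lemma core {n : ℕ} (q : Fin n → ℝ) (hq : ∀ i, 0 ≤ q i) (hsum : ∑ i, q i = 1)
    (τ : Equiv.Perm (Fin n)) :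
    (2:ℝ) ^ (-∑ i, q i * Real.logb 2 (q i)) / Real.exp 1 + 1/2
      ≤ ∑ i, ((τ i : ℝ) + 1) * q i := by
  set G : ℝ := ∑ i, ((τ i : ℝ) + 1) * q i with hGdef
  have hG1 : 1 ≤ G := by
    rw [hGdef, ← hsum]
    refine Finset.sum_le_sum fun i _ => ?_
    nlinarith [hq i, Nat.cast_nonneg (α := ℝ) (τ i : ℕ)]
  set l : ℝ := (G - 1/2)⁻¹ with hldef
  have hG2 : (0:ℝ) < G - 1/2 := by linarith
  have hl : 0 < l := inv_pos.mpr hG2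
  set s : ℝ := Real.exp (-l) with hsdef
  have hs0 : 0 < s := Real.exp_pos _
  have hs1 : s < 1 := Real.exp_lt_one_iff.mpr (by linarith)
  -- Gibbs inequality
  have hterm : ∀ i, q i * Real.log ((1 - s) * s ^ (τ i : ℕ)) - q i * Real.log (q i)
      ≤ (1 - s) * s ^ (τ i : ℕ) - q i := by
    intro i
    have hg : 0 < (1 - s) * s ^ (τ i : ℕ) := mul_pos (by linarith) (pow_pos hs0 _)
    rcases eq_or_lt_of_le (hq i) with h0 | h0
    · simp [← h0]; linarith
    · have := Real.log_le_sub_one_of_pos (x := ((1 - s) * s ^ (τ i : ℕ)) / q i)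
        (div_pos hg h0)
      rw [Real.log_div (ne_of_gt hg) (ne_of_gt h0)] at this
      have h2 := mul_le_mul_of_nonneg_left this (le_of_lt h0)
      calc q i * Real.log ((1 - s) * s ^ (τ i : ℕ)) - q i * Real.log (q i)
          = q i * (Real.log ((1 - s) * s ^ (τ i : ℕ)) - Real.log (q i)) := by ring
        _ ≤ q i * ((1 - s) * s ^ (τ i : ℕ) / q i - 1) := h2
        _ = (1 - s) * s ^ (τ i : ℕ) - q i := by field_simp
  have hgsum : ∑ i : Fin n, (1 - s) * s ^ (τ i : ℕ) ≤ 1 := by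
    have h1 : ∑ i : Fin n, (1 - s) * s ^ (τ i : ℕ) = ∑ i : Fin n, (1 - s) * s ^ (i : ℕ) :=
      Equiv.sum_comp τ (fun i => (1 - s) * s ^ (i : ℕ))
    rw [h1, ← Finset.mul_sum, Fin.sum_univ_eq_sum_range (fun k => s ^ k),
      geom_sum_eq (ne_of_lt hs1)]
    have : (1 - s) * ((s ^ n - 1) / (s - 1)) = 1 - s ^ n := by
      have hne : (1:ℝ) - s ≠ 0 := by linarith
      have e : (s ^ n - 1) / (s - 1) = (1 - s ^ n) / (1 - s) := by
        rw [div_eq_div_iff (by linarith) (by linarith)]; ring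
      rw [e, mul_comm, div_mul_eq_mul_div, mul_div_assoc, div_self hne, mul_one]
    rw [this]
    nlinarith [pow_nonneg (le_of_lt hs0) n]
  have hgibbs : ∑ i, q i * Real.log ((1 - s) * s ^ (τ i : ℕ)) ≤ ∑ i, q i * Real.log (q i) := by
    have := Finset.sum_le_sum (fun i (_ : i ∈ Finset.univ) => hterm i)
    rw [Finset.sum_sub_distrib, Finset.sum_sub_distrib, hsum] at this
    linarith [hgsum]
  -- compute lhs of gibbs
  have hcomp : ∑ i, q i * Real.log ((1 - s) * s ^ (τ i : ℕ))
      = Real.log (1 - s) - l * (G - 1) := by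
    have h1 : ∀ i : Fin n, q i * Real.log ((1 - s) * s ^ (τ i : ℕ))
        = q i * Real.log (1 - s) - l * ((τ i : ℝ) * q i) := by
      intro i
      rw [Real.log_mul (by linarith) (by positivity), Real.log_pow, hsdef, Real.log_exp]
      ring
    rw [Finset.sum_congr rfl (fun i _ => h1 i), Finset.sum_sub_distrib, ← Finset.sum_mul,
      hsum, ← Finset.mul_sum]
    have h2 : ∑ i, (τ i : ℝ) * q i = G - 1 := by
      have e : G = (∑ i, (τ i : ℝ) * q i) + ∑ i, q i := by
        rw [hGdef, ← Finset.sum_add_distrib]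
        exact Finset.sum_congr rfl fun i _ => by ring
      rw [e, hsum]; ring
    rw [h2]; ring
  -- entropy in nats
  have hH : (2:ℝ) ^ (-∑ i, q i * Real.logb 2 (q i)) = Real.exp (-∑ i, q i * Real.log (q i)) := by
    rw [Real.rpow_def_of_pos (by norm_num : (0:ℝ) < 2)]
    congr 1
    have hlog2 : Real.log 2 ≠ 0 := ne_of_gt (Real.log_pos (by norm_num))
    unfold Real.logb
    rw [mul_neg, neg_inj, Finset.mul_sum]
    refine Finset.sum_congr rfl fun i _ => ?_
    field_simp
  have hlg : l * (G - 1) = 1 - l / 2 := by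
    have h0 : l * (G - 1/2) = 1 := inv_mul_cancel₀ (ne_of_gt hG2)
    nlinarith [h0]
  have hfin1 : (2:ℝ) ^ (-∑ i, q i * Real.logb 2 (q i))
      ≤ Real.exp 1 * Real.exp (-l / 2) / (1 - s) := by
    rw [hH]
    have h6 : -∑ i, q i * Real.log (q i) ≤ l * (G - 1) - Real.log (1 - s) := by
      have := hgibbs; rw [hcomp] at this; linarith
    calc Real.exp (-∑ i, q i * Real.log (q i))
        ≤ Real.exp (l * (G - 1) - Real.log (1 - s)) := Real.exp_le_exp.mpr h6
      _ = Real.exp (l * (G - 1)) / (1 - s) := by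
          rw [Real.exp_sub, Real.exp_log (by linarith)]
      _ = Real.exp 1 * Real.exp (-l / 2) / (1 - s) := by
          rw [hlg, show (1 : ℝ) - l/2 = 1 + (-l/2) by ring, Real.exp_add]
  have h3 : Real.exp (-l / 2) / (1 - s) ≤ G - 1/2 := by
    rw [div_le_iff₀ (by linarith : (0:ℝ) < 1 - s)]
    have hke := key_exp hl.le
    have h0 : l * (G - 1/2) = 1 := inv_mul_cancel₀ (ne_of_gt hG2)
    nlinarith [hke, hG2]
  have h7 : (2:ℝ) ^ (-∑ i, q i * Real.logb 2 (q i)) / Real.exp 1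
      ≤ Real.exp (-l / 2) / (1 - s) := by
    rw [div_le_iff₀ (Real.exp_pos 1)]
    calc (2:ℝ) ^ (-∑ i, q i * Real.logb 2 (q i))
        ≤ Real.exp 1 * Real.exp (-l / 2) / (1 - s) := hfin1
      _ = Real.exp (-l / 2) / (1 - s) * Real.exp 1 := by ring
  linarith

lemma core2 {n : ℕ} (q : Fin n → ℝ) (hq : ∀ i, 0 ≤ q i) {Q : ℝ} (hQ : 0 < Q)
    (hsum : ∑ i, q i = Q) (τ : Equiv.Perm (Fin n)) :
    Q * ((2:ℝ) ^ ((-∑ i, q i * Real.logb 2 (q i / Q)) / Q) / Real.exp 1 + 1/2)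
      ≤ ∑ i, ((τ i : ℝ) + 1) * q i := by
  have h := core (fun i => q i / Q) (fun i => div_nonneg (hq i) hQ.le)
    (by rw [← Finset.sum_div, hsum, div_self (ne_of_gt hQ)]) τ
  have e1 : (-∑ i, q i / Q * Real.logb 2 (q i / Q)) = (-∑ i, q i * Real.logb 2 (q i / Q)) / Q := by
    rw [neg_div, Finset.sum_div]
    congr 1
    exact Finset.sum_congr rfl fun i _ => by ring
  rw [e1] at h
  have e2 : ∑ i, ((τ i : ℝ) + 1) * (q i / Q) = (∑ i, ((τ i : ℝ) + 1) * q i) / Q := by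
    rw [Finset.sum_div]
    exact Finset.sum_congr rfl fun i _ => by ring
  rw [e2, le_div_iff₀ hQ] at h
  linarith [h]


lemma jensen {Y : Type} [Fintype Y] (w h : Y → ℝ) (hw : ∀ y, 0 ≤ w y)
    (h1 : ∑ y, w y = 1) :
    (2:ℝ) ^ (∑ y, w y * h y) ≤ ∑ y, w y * (2:ℝ) ^ (h y) := by
  have hc := convexOn_exp.map_sum_le (t := Finset.univ) (w := w)
    (p := fun y => Real.log 2 * h y) (fun y _ => hw y) h1 (fun y _ => Set.mem_univ _)
  have e1 : ∑ y, w y • (Real.log 2 * h y) = Real.log 2 * ∑ y, w y * h y := by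
    rw [Finset.mul_sum]
    exact Finset.sum_congr rfl fun y _ => by simp [smul_eq_mul]; ring
  have e2 : ∀ x : ℝ, (2:ℝ) ^ x = Real.exp (Real.log 2 * x) := fun x =>
    Real.rpow_def_of_pos (by norm_num) x
  rw [e2, ← e1]
  calc Real.exp (∑ y, w y • (Real.log 2 * h y)) ≤ ∑ y, w y • Real.exp (Real.log 2 * h y) := hc
    _ = ∑ y, w y * (2:ℝ) ^ (h y) := Finset.sum_congr rfl fun y _ => by
        rw [smul_eq_mul, ← e2]


end GuessworkAux

/-- entropic lower bound via accessible information, for any POVM. -/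
theorem classical_guesswork_entropic_lower_bound {d n : ℕ}
    (ρ : Fin n → Matrix (Fin d) (Fin d) ℂ) (p : Fin n → ℝ)
    (hρ : ∀ x, (ρ x).PosSemidef) (hρtr : ∀ x, (ρ x).trace = 1)
    (hp : ∀ x, 0 ≤ p x) (hpsum : ∑ x, p x = 1)
    (Y : Type) [Fintype Y] (E : Y → Matrix (Fin d) (Fin d) ℂ) (hE : IsPOVM E) :
    (2 : ℝ) ^ (shannonH p -
        ∑ x : Fin n, ∑ y : Y,
          (p x * ((E y * ρ x).trace.re)) *
            Real.logb 2 ((p x * ((E y * ρ x).trace.re)) /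
              ((∑ y' : Y, p x * ((E y' * ρ x).trace.re)) *
               (∑ x' : Fin n, p x' * ((E y * ρ x').trace.re))))) / Real.exp 1
      + 1 / 2 ≤ Gopt ρ p E := by
  obtain ⟨hEpsd, hEsum⟩ := hE
  have hqnn : ∀ x y, 0 ≤ p x * ((E y * ρ x).trace.re) := fun x y =>
    mul_nonneg (hp x) (trace_mul_re_nonneg (hEpsd y) (hρ x))
  have hmarg : ∀ x, ∑ y, p x * ((E y * ρ x).trace.re) = p x := by
    intro x
    rw [← Finset.mul_sum]
    have h2 : ∑ y, ((E y * ρ x).trace.re) = 1 := by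
      have h1 : ∑ y, (E y * ρ x).trace = 1 := by
        rw [← Matrix.trace_sum, ← Finset.sum_mul, hEsum, one_mul, hρtr x]
      calc ∑ y, ((E y * ρ x).trace.re) = ((∑ y, (E y * ρ x).trace)).re :=
            (Complex.re_sum _ _).symm
        _ = 1 := by rw [h1]; simp
    rw [h2, mul_one]
  set r : Y → ℝ := fun y => ∑ x, p x * ((E y * ρ x).trace.re) with hrdef
  have hrnn : ∀ y, 0 ≤ r y := fun y => Finset.sum_nonneg fun x _ => hqnn x y
  have hrsum : ∑ y, r y = 1 := by
    rw [hrdef, Finset.sum_comm]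
    rw [Finset.sum_congr rfl fun x _ => hmarg x, hpsum]
  set N : Y → ℝ := fun y => -∑ x, (p x * ((E y * ρ x).trace.re)) *
      Real.logb 2 ((p x * ((E y * ρ x).trace.re)) / r y) with hNdef
  have hq0 : ∀ y, r y = 0 → ∀ x, p x * ((E y * ρ x).trace.re) = 0 := by
    intro y h0 x
    exact (Finset.sum_eq_zero_iff_of_nonneg (fun x _ => hqnn x y)).mp h0 x (Finset.mem_univ x)
  have hbound : ∀ y : Y, r y * ((2:ℝ) ^ (N y / r y) / Real.exp 1 + 1/2)
      ≤ ⨅ τ : Equiv.Perm (Fin n),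
          ∑ i : Fin n, (((τ i).val : ℝ) + 1) * p i * ((E y * ρ i).trace.re) := by
    intro y
    rcases eq_or_lt_of_le (hrnn y) with h0 | h0
    · rw [← h0, zero_mul]
      refine le_ciInf fun τ => le_of_eq ?_
      exact (Finset.sum_eq_zero fun i _ => by
        rw [mul_assoc, hq0 y h0.symm i, mul_zero]).symm
    · refine le_ciInf fun τ => ?_
      have h := core2 (fun x => p x * ((E y * ρ x).trace.re)) (fun x => hqnn x y) h0 rfl τ
      calc r y * ((2:ℝ) ^ (N y / r y) / Real.exp 1 + 1/2)
          ≤ ∑ i, (((τ i : ℕ) : ℝ) + 1) * (p i * ((E y * ρ i).trace.re)) := h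
        _ = ∑ i, (((τ i).val : ℝ) + 1) * p i * ((E y * ρ i).trace.re) :=
            Finset.sum_congr rfl fun i _ => (mul_assoc _ _ _).symm
  have hNsum : ∀ y, r y * (N y / r y) = N y := by
    intro y
    rcases eq_or_lt_of_le (hrnn y) with h0 | h0
    · have hN0 : N y = 0 := by
        rw [hNdef, neg_eq_zero]
        exact Finset.sum_eq_zero fun x _ => by rw [hq0 y h0.symm x, zero_mul]
      rw [hN0, ← h0, zero_mul]
    · field_simp
  have hexp : shannonH p -
        ∑ x : Fin n, ∑ y : Y,
          (p x * ((E y * ρ x).trace.re)) *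
            Real.logb 2 ((p x * ((E y * ρ x).trace.re)) /
              ((∑ y' : Y, p x * ((E y' * ρ x).trace.re)) *
               (∑ x' : Fin n, p x' * ((E y * ρ x').trace.re))))
      = ∑ y, N y := by
    have hswap : ∑ y, N y
        = ∑ x, ∑ y, -((p x * ((E y * ρ x).trace.re)) *
            Real.logb 2 ((p x * ((E y * ρ x).trace.re)) / r y)) := by
      rw [Finset.sum_comm (γ := Fin n)]
      exact Finset.sum_congr rfl fun y _ => by rw [hNdef, Finset.sum_neg_distrib]
    rw [hswap]
    unfold shannonH
    rw [← Finset.sum_neg_distrib, ← Finset.sum_sub_distrib]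
    refine Finset.sum_congr rfl fun x _ => ?_
    rw [Finset.sum_congr rfl fun y (_ : y ∈ Finset.univ) => by rw [hmarg x]]
    have hpx : -(p x * Real.logb 2 (p x))
        = ∑ y, -((p x * ((E y * ρ x).trace.re)) * Real.logb 2 (p x)) := by
      rw [Finset.sum_neg_distrib, ← Finset.sum_mul, hmarg x]
    rw [hpx, ← Finset.sum_sub_distrib]
    refine Finset.sum_congr rfl fun y _ => ?_
    have hR : (∑ x' : Fin n, p x' * ((E y * ρ x').trace.re)) = r y := rfl
    rw [hR]
    rcases eq_or_lt_of_le (hqnn x y) with ha | ha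
    · rw [← ha]; simp
    · have hpx0 : 0 < p x := by
        rcases (hp x).lt_or_eq with h | h
        · exact h
        · exfalso; rw [← h, zero_mul] at ha; exact lt_irrefl _ ha
      have hry : 0 < r y := lt_of_lt_of_le ha
        (Finset.single_le_sum (fun i (_ : i ∈ Finset.univ) => hqnn i y) (Finset.mem_univ x))
      rw [Real.logb_div (ne_of_gt ha) (ne_of_gt (mul_pos hpx0 hry)),
          Real.logb_mul (ne_of_gt hpx0) (ne_of_gt hry),
          Real.logb_div (ne_of_gt ha) (ne_of_gt hry)]
      ring
  rw [hexp]
  unfold Gopt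
  have hjen := jensen r (fun y => N y / r y) hrnn hrsum
  calc (2:ℝ) ^ (∑ y, N y) / Real.exp 1 + 1/2
      = (2:ℝ) ^ (∑ y, r y * (N y / r y)) / Real.exp 1 + 1/2 := by
        rw [Finset.sum_congr rfl fun y _ => (hNsum y)]
    _ ≤ (∑ y, r y * (2:ℝ) ^ (N y / r y)) / Real.exp 1 + 1/2 := by
        have := (div_le_div_iff_of_pos_right (Real.exp_pos 1)).mpr hjen
        linarith
    _ = ∑ y, r y * ((2:ℝ) ^ (N y / r y) / Real.exp 1 + 1/2) := by
        rw [Finset.sum_congr rfl fun y (_ : y ∈ Finset.univ) =>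
          show r y * ((2:ℝ) ^ (N y / r y) / Real.exp 1 + 1/2)
            = r y * (2:ℝ) ^ (N y / r y) / Real.exp 1 + r y * (1/2) by ring]
        rw [Finset.sum_add_distrib, ← Finset.sum_div, ← Finset.sum_mul, hrsum]
        ring
    _ ≤ ∑ y, ⨅ τ : Equiv.Perm (Fin n),
          ∑ i : Fin n, (((τ i).val : ℝ) + 1) * p i * ((E y * ρ i).trace.re) :=
        Finset.sum_le_sum fun y _ => hbound y


end
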